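/- Let d ≥ 3 and fix 0 < ε < 1 < M and an integer m ≥ 1. ℙ-almost surely, for all n large enough: for every x ∈ 𝔻(n), the number of sites of ℬ(n) in the cube B_x(ι(n)) of side ι(n) centered at x is at most n² ν(n)^d g(n)^{−2α} r(n)^d. -/

import Mathlib

/-!
The bound holds for all of `ℬ(n)`, not only inside the cube. A site is a bad trap only if it and
another site within distance `ν(n)` both have `τ ≥ ε g(n)`; by independence and the tail bound
`ℙ[τ ≥ ε g(n)] ≤ 2 (ε g(n))^{-α}`, the expected number of bad traps in `𝔻(n)` is
`O(r(n)^d ν(n)^d g(n)^{-2α})`. Markov's inequality then bounds the probability of exceeding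
`n² ν(n)^d g(n)^{-2α} r(n)^d` by `O(n⁻²)`, which is summable, and Borel–Cantelli concludes.
-/

open MeasureTheory ProbabilityTheory Filter Set
open scoped ENNReal NNReal

/-- Euclidean norm of a point of `ℤ^d`. -/
noncomputable def znorm {d : ℕ} (x : Fin d → ℤ) : ℝ :=
  Real.sqrt (∑ i, ((x i : ℝ)) ^ 2)

/-- The unit step of the simple random walk indexed by a coordinate and a sign. -/
def stepVec (d : ℕ) (p : Fin d × Bool) : Fin d → ℤ :=
  fun j => if j = p.1 then (if p.2 then 1 else -1) else 0

/-- `Y` is a simple random walk on `ℤ^d` started at `0` under `P`. -/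
structure IsSRW {Ω : Type*} [MeasurableSpace Ω] (P : Measure Ω) (d : ℕ)
    (Y : ℕ → Ω → (Fin d → ℤ)) : Prop where
  meas : ∀ k, Measurable (Y k)
  init : ∀ ω, Y 0 ω = 0
  indep : iIndepFun (fun k ω => Y (k + 1) ω - Y k ω) P
  step : ∀ k p, P {ω | Y (k + 1) ω - Y k ω = stepVec d p} = (2 * d : ℝ≥0∞)⁻¹

/-- i.i.d. heavy-tailed random environment on `ℤ^d`. -/
structure IsEnv {Ω : Type*} [MeasurableSpace Ω] (P : Measure Ω) (d : ℕ) (α : ℝ)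
    (L : ℝ → ℝ) (τ : (Fin d → ℤ) → Ω → ℝ) : Prop where
  meas : ∀ x, Measurable (τ x)
  pos : ∀ x ω, 0 < τ x ω
  indep : iIndepFun τ P
  tail : ∀ x u, (1 : ℝ) ≤ u → P {ω | u ≤ τ x ω} = ENNReal.ofReal (u ^ (-α) * (1 + L u))
  decay : Tendsto L atTop (nhds 0)

noncomputable def gscale (α : ℝ) (n : ℕ) : ℝ := (2 : ℝ) ^ ((n : ℝ) / α)
noncomputable def rscale (n : ℕ) : ℝ := (2 : ℝ) ^ ((n : ℝ) / 2)
noncomputable def rhoscale (d n : ℕ) : ℝ := (2 : ℝ) ^ ((1 - 1 / (3 * (d : ℝ))) * n / 2)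
noncomputable def nuscale (d n : ℕ) : ℝ := (2 : ℝ) ^ ((1 / (d : ℝ)) * n / 2)
noncomputable def iotascale (d n : ℕ) : ℝ := (2 : ℝ) ^ ((1 - 2 / (3 * (d : ℝ))) * n / 2)
noncomputable def hscale (d n : ℕ) : ℝ := rscale n / rhoscale d n

/-- the big ball `𝔻(n)` of radius `m · r(n)`. -/
def bigD (d m n : ℕ) : Set (Fin d → ℤ) := {x | znorm x ≤ m * rscale n}

/-- the cube of side `ℓ` centered at `x`. -/
def cube {d : ℕ} (x : Fin d → ℤ) (ℓ : ℝ) : Set (Fin d → ℤ) :=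
  {y | ∀ i, |((y i : ℝ)) - ((x i : ℝ))| ≤ ℓ / 2}

/-- the set of deep traps `T_ε^M(n)`. -/
noncomputable def traps {Ω : Type*} {d : ℕ} (τ : (Fin d → ℤ) → Ω → ℝ) (α : ℝ) (m : ℕ)
    (ε M : ℝ) (n : ℕ) (ω : Ω) : Set (Fin d → ℤ) :=
  {x ∈ bigD d m n | ε * gscale α n ≤ τ x ω ∧ τ x ω < M * gscale α n}

/-- the set `ℰ(n)` of sites far from all deep traps. -/
noncomputable def calE {Ω : Type*} {d : ℕ} (τ : (Fin d → ℤ) → Ω → ℝ) (α : ℝ) (m : ℕ)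
    (ε M : ℝ) (n : ℕ) (ω : Ω) : Set (Fin d → ℤ) :=
  {x ∈ bigD d m n | ∀ y ∈ traps τ α m ε M n ω, nuscale d n < znorm (x - y)}

/-- the set `ℰ₀(n)` of sites of `ℰ(n)` far from the boundary of `𝔻(n)`. -/
noncomputable def calE₀ {Ω : Type*} {d : ℕ} (τ : (Fin d → ℤ) → Ω → ℝ) (α : ℝ) (m : ℕ)
    (ε M : ℝ) (n : ℕ) (ω : Ω) : Set (Fin d → ℤ) :=
  {x ∈ calE τ α m ε M n ω | ∀ y, y ∉ bigD d m n → rhoscale d n < znorm (x - y)}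


/-- the set `ℬ(n)` of bad traps: traps with another trap within distance `ν(n)`. -/
noncomputable def badTraps {Ω : Type*} {d : ℕ} (τ : (Fin d → ℤ) → Ω → ℝ) (α : ℝ) (m : ℕ)
    (ε M : ℝ) (n : ℕ) (ω : Ω) : Set (Fin d → ℤ) :=
  {x ∈ traps τ α m ε M n ω |
    ∃ y ∈ traps τ α m ε M n ω, y ≠ x ∧ znorm (x - y) ≤ nuscale d n}

section Lattice

variable {d : ℕ}

lemma abs_coord_le_znorm (x : Fin d → ℤ) (i : Fin d) : |(x i : ℝ)| ≤ znorm x := by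
  rw [znorm, ← Real.sqrt_sq_eq_abs]
  exact Real.sqrt_le_sqrt (Finset.single_le_sum (f := fun j => ((x j : ℝ)) ^ 2)
    (fun j _ => sq_nonneg _) (Finset.mem_univ i))

noncomputable def intBox (d : ℕ) (B : ℝ) : Finset (Fin d → ℤ) :=
  Fintype.piFinset fun _ => Finset.Icc (-⌊B⌋) ⌊B⌋

lemma mem_intBox_of_znorm_le {B : ℝ} {x : Fin d → ℤ} (h : znorm x ≤ B) : x ∈ intBox d B := by
  refine Fintype.mem_piFinset.mpr fun i => Finset.mem_Icc.mpr ?_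
  obtain ⟨hlo, hhi⟩ := abs_le.mp ((abs_coord_le_znorm x i).trans h)
  exact ⟨neg_le.mp (Int.le_floor.mpr (by push_cast; linarith)), Int.le_floor.mpr hhi⟩

lemma card_intBox_le {B : ℝ} (hB : 0 ≤ B) : ((intBox d B).card : ℝ) ≤ (2 * B + 1) ^ d := by
  have hfloor : 0 ≤ ⌊B⌋ := Int.floor_nonneg.mpr hB
  have hcard : (intBox d B).card = (2 * ⌊B⌋ + 1).toNat ^ d := by
    rw [intBox, Fintype.card_piFinset, Finset.prod_const, Finset.card_univ, Fintype.card_fin,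
      Int.card_Icc]
    congr 2
    ring
  have hside : ((2 * ⌊B⌋ + 1).toNat : ℝ) ≤ 2 * B + 1 := by
    rw [← Int.cast_natCast, Int.toNat_of_nonneg (by omega)]
    push_cast
    linarith [Int.floor_le B]
  rw [hcard, Nat.cast_pow]
  exact pow_le_pow_left₀ (Nat.cast_nonneg _) hside d

end Lattice

section Environment

variable {Ω : Type*} [MeasurableSpace Ω] {P : Measure Ω} {d : ℕ}

lemma IsEnv.measure_ge_le_two_mul_rpow_neg {α : ℝ} {L : ℝ → ℝ} {τ : (Fin d → ℤ) → Ω → ℝ}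
    (hτ : IsEnv P d α L τ) {u : ℝ} (hu : 1 ≤ u) (hL : L u ≤ 1) (x : Fin d → ℤ) :
    P {ω | u ≤ τ x ω} ≤ ENNReal.ofReal (2 * u ^ (-α)) := by
  rw [hτ.tail x u hu]
  refine ENNReal.ofReal_le_ofReal ?_
  nlinarith [Real.rpow_nonneg (zero_le_one.trans hu) (-α)]

lemma measure_exists_near_pair_le {τ : (Fin d → ℤ) → Ω → ℝ} (hind : iIndepFun τ P) {t : ℝ}
    {q : ℝ≥0∞} (hq : ∀ y, P {ω | t ≤ τ y ω} ≤ q) {R : ℝ} (hR : 0 ≤ R) (x : Fin d → ℤ) :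
    P {ω | t ≤ τ x ω ∧ ∃ y, y ≠ x ∧ znorm (x - y) ≤ R ∧ t ≤ τ y ω}
      ≤ ENNReal.ofReal ((2 * R + 1) ^ d) * q ^ 2 := by
  set T : (Fin d → ℤ) → Set Ω := fun y => τ y ⁻¹' Set.Ici t
  set nbhd := ((intBox d R).image (x - ·)).erase x
  have hcover : {ω | t ≤ τ x ω ∧ ∃ y, y ≠ x ∧ znorm (x - y) ≤ R ∧ t ≤ τ y ω}
      ⊆ ⋃ y ∈ nbhd, T x ∩ T y := by
    rintro ω ⟨hx, y, hyx, hdist, hy⟩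
    refine Set.mem_iUnion₂.mpr ⟨y, Finset.mem_erase.mpr ⟨hyx, Finset.mem_image.mpr
      ⟨x - y, mem_intBox_of_znorm_le hdist, sub_sub_cancel x y⟩⟩, hx, hy⟩
  have hpair : ∀ y ∈ nbhd, P (T x ∩ T y) ≤ q ^ 2 := fun y hy => by
    rw [(hind.indepFun (Finset.ne_of_mem_erase hy).symm).measure_inter_preimage_eq_mul
      _ _ measurableSet_Ici measurableSet_Ici, sq]
    exact mul_le_mul' (hq x) (hq y)
  have hcard : (nbhd.card : ℝ≥0∞) ≤ ENNReal.ofReal ((2 * R + 1) ^ d) := by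
    rw [← ENNReal.ofReal_natCast]
    refine ENNReal.ofReal_le_ofReal (le_trans ?_ (card_intBox_le hR))
    exact_mod_cast Finset.card_erase_le.trans Finset.card_image_le
  calc _ ≤ P (⋃ y ∈ nbhd, T x ∩ T y) := measure_mono hcover
    _ ≤ ∑ y ∈ nbhd, P (T x ∩ T y) := measure_biUnion_finset_le _ _
    _ ≤ nbhd.card * q ^ 2 := by
      simpa [nsmul_eq_mul] using Finset.sum_le_sum hpair
    _ ≤ _ := mul_le_mul_left hcard _

end Environment

section Counting

variable {Ω : Type*} [MeasurableSpace Ω] {P : Measure Ω}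

lemma measure_lt_ncard_le {ι : Type*} {S : Ω → Set ι} (D : Finset ι) (hSD : ∀ ω, S ω ⊆ D)
    (hmeas : ∀ i, MeasurableSet {ω | i ∈ S ω}) {K : ℝ} (hK : 0 < K) :
    P {ω | K < (S ω).ncard} ≤ (∑ i ∈ D, P {ω | i ∈ S ω}) / ENNReal.ofReal K := by
  classical
  set f : Ω → ℝ≥0∞ := fun ω => ∑ i ∈ D, {ω | i ∈ S ω}.indicator 1 ω
  have hcount : ∀ ω, ((S ω).ncard : ℝ≥0∞) = f ω := fun ω => by
    have hS : S ω = ↑(D.filter (· ∈ S ω)) := by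
      ext i
      simpa using fun hi => hSD ω hi
    rw [hS, Set.ncard_coe_finset, Finset.card_filter, Nat.cast_sum]
    refine Finset.sum_congr rfl fun i _ => ?_
    by_cases hi : i ∈ S ω <;> simp [hi]
  have hsub : {ω | K < (S ω).ncard} ⊆ {ω | ENNReal.ofReal K ≤ f ω} := fun ω hω => by
    rw [Set.mem_ofPred_eq, ← hcount, ← ENNReal.ofReal_natCast]
    exact ENNReal.ofReal_le_ofReal (le_of_lt hω)
  have hf : ∫⁻ ω, f ω ∂P = ∑ i ∈ D, P {ω | i ∈ S ω} := by
    rw [lintegral_finsetSum (f := fun i => {ω | i ∈ S ω}.indicator 1) _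
      fun i _ => measurable_const.indicator (hmeas i)]
    exact Finset.sum_congr rfl fun i _ => lintegral_indicator_one (hmeas i)
  calc _ ≤ P {ω | ENNReal.ofReal K ≤ f ω} := measure_mono hsub
    _ ≤ (∫⁻ ω, f ω ∂P) / ENNReal.ofReal K :=
      meas_ge_le_lintegral_div
        (Finset.measurable_sum _ fun i _ => measurable_const.indicator (hmeas i)).aemeasurable
        (by simpa using hK) ENNReal.ofReal_ne_top
    _ = _ := by rw [hf]

lemma ae_eventually_notMem_of_measure_le_div_sq {s : ℕ → Set Ω} {C : ℝ} (N : ℕ)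
    (hs : ∀ n ≥ N, P (s n) ≤ ENNReal.ofReal (C / (n : ℝ) ^ 2)) :
    ∀ᵐ ω ∂P, ∀ᶠ n in atTop, ω ∉ s n := by
  classical
  set s' : ℕ → Set Ω := fun n => if N ≤ n then s n else ∅
  have hs' : ∀ n, P (s' n) ≤ ENNReal.ofReal (C / (n : ℝ) ^ 2) := fun n => by
    by_cases hn : N ≤ n <;> simp [s', hn, hs]
  have hsummable : Summable fun n : ℕ => C / (n : ℝ) ^ 2 := by
    simpa [div_eq_mul_inv] using (Real.summable_nat_pow_inv.mpr one_lt_two).mul_left C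
  have hfinite : ∑' n, P (s' n) ≠ ⊤ :=
    ne_top_of_le_ne_top hsummable.tsum_ofReal_ne_top (ENNReal.tsum_le_tsum hs')
  filter_upwards [ae_eventually_notMem hfinite] with ω hω
  filter_upwards [hω, eventually_ge_atTop N] with n hn hNn
  simpa [s', hNn] using hn

end Counting

lemma tendsto_gscale_atTop {α : ℝ} (hα : 0 < α) : Tendsto (gscale α) atTop atTop :=
  (tendsto_rpow_atTop_of_base_gt_one 2 one_lt_two).comp
    (tendsto_natCast_atTop_atTop.atTop_div_const hα)

/-- The scale bookkeeping behind `|𝔻(n)| · |B(ν(n))| · (2 (ε g(n))^{-α})² = O(r^d ν^d g^{-2α})`. -/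
lemma pair_count_bound_le {m r ν ε g α : ℝ} (hm : 0 ≤ m) (hr : 1 ≤ r) (hν : 1 ≤ ν)
    (hε : 0 < ε) (hg : 0 < g) (d : ℕ) :
    (2 * (m * r) + 1) ^ d * ((2 * ν + 1) ^ d * (2 * (ε * g) ^ (-α)) ^ 2)
      ≤ 4 * (3 * (2 * m + 1)) ^ d * ε ^ (-(2 * α)) * (ν ^ d * (g ^ (-(2 * α)) * r ^ d)) := by
  have hD : (2 * (m * r) + 1) ^ d ≤ ((2 * m + 1) * r) ^ d :=
    pow_le_pow_left₀ (by positivity) (by nlinarith) d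
  have hB : (2 * ν + 1) ^ d ≤ (3 * ν) ^ d := pow_le_pow_left₀ (by positivity) (by linarith) d
  have hp : (2 * (ε * g) ^ (-α)) ^ 2 = 4 * (ε ^ (-(2 * α)) * g ^ (-(2 * α))) := by
    rw [Real.mul_rpow hε.le hg.le, show -(2 * α) = -α + -α by ring, Real.rpow_add hε,
      Real.rpow_add hg]
    ring
  calc _ ≤ ((2 * m + 1) * r) ^ d * ((3 * ν) ^ d * (2 * (ε * g) ^ (-α)) ^ 2) := by gcongr
    _ = _ := by rw [hp, mul_pow, mul_pow, mul_pow]; ring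

section Traps

variable {Ω : Type*} {d : ℕ} {τ : (Fin d → ℤ) → Ω → ℝ} {α : ℝ} {m : ℕ} {ε M : ℝ} {n : ℕ}

lemma badTraps_subset_intBox (ω : Ω) :
    badTraps τ α m ε M n ω ⊆ intBox d (m * rscale n) :=
  fun _ hx => mem_intBox_of_znorm_le hx.1.1

variable [MeasurableSpace Ω] {P : Measure Ω}

lemma measurableSet_mem_traps (hτ : ∀ x, Measurable (τ x)) (x : Fin d → ℤ) :
    MeasurableSet {ω | x ∈ traps τ α m ε M n ω} :=
  (MeasurableSet.const (x ∈ bigD d m n)).inter ((hτ x) measurableSet_Ico)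

lemma measurableSet_mem_badTraps (hτ : ∀ x, Measurable (τ x)) (x : Fin d → ℤ) :
    MeasurableSet {ω | x ∈ badTraps τ α m ε M n ω} := by
  have h : {ω | x ∈ badTraps τ α m ε M n ω} = {ω | x ∈ traps τ α m ε M n ω} ∩
      ⋃ y, {ω | y ∈ traps τ α m ε M n ω} ∩ {_ω | y ≠ x ∧ znorm (x - y) ≤ nuscale d n} := by
    ext ω
    simp [badTraps]
  rw [h]
  exact (measurableSet_mem_traps hτ x).inter
    (.iUnion fun y => (measurableSet_mem_traps hτ y).inter (.const _))

lemma measure_mem_badTraps_le (hind : iIndepFun τ P) {q : ℝ≥0∞}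
    (hq : ∀ y, P {ω | ε * gscale α n ≤ τ y ω} ≤ q) (x : Fin d → ℤ) :
    P {ω | x ∈ badTraps τ α m ε M n ω} ≤ ENNReal.ofReal ((2 * nuscale d n + 1) ^ d) * q ^ 2 := by
  refine le_trans (measure_mono fun ω hω => ?_)
    (measure_exists_near_pair_le hind hq (Real.rpow_nonneg zero_le_two _) x)
  obtain ⟨hx, y, hy, hyx, hdist⟩ := hω
  exact ⟨hx.2.1, y, hyx, hdist, hy.2.1⟩

end Traps

lemma IsEnv.measure_lt_ncard_badTraps_le {Ω : Type*} [MeasurableSpace Ω] {P : Measure Ω}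
    {d : ℕ} {α : ℝ} {L : ℝ → ℝ} {τ : (Fin d → ℤ) → Ω → ℝ} (hτ : IsEnv P d α L τ)
    (m : ℕ) {ε : ℝ} (M : ℝ) {n : ℕ} (hn : 0 < n) (hu : 1 ≤ ε * gscale α n)
    (hL : L (ε * gscale α n) ≤ 1) :
    P {ω | (n : ℝ) ^ 2 * nuscale d n ^ (d : ℝ) * gscale α n ^ (-(2 * α)) * rscale n ^ (d : ℝ)
        < (badTraps τ α m ε M n ω).ncard}
      ≤ ENNReal.ofReal (4 * (3 * (2 * m + 1)) ^ d * ε ^ (-(2 * α)) / (n : ℝ) ^ 2) := by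
  set C : ℝ := 4 * (3 * (2 * m + 1)) ^ d * ε ^ (-(2 * α))
  simp only [Real.rpow_natCast, mul_assoc]
  set X := nuscale d n ^ d * (gscale α n ^ (-(2 * α)) * rscale n ^ d)
  have hg : 0 < gscale α n := Real.rpow_pos_of_pos two_pos _
  have hε : 0 < ε := pos_of_mul_pos_left (one_pos.trans_le hu) hg.le
  have hr : 1 ≤ rscale n := Real.one_le_rpow one_le_two (by positivity)
  have hν : 1 ≤ nuscale d n := Real.one_le_rpow one_le_two (by positivity)
  have hX : 0 < X := by positivity
  have hn2 : (0 : ℝ) < (n : ℝ) ^ 2 := by positivity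
  have hsum : ∑ x ∈ intBox d (m * rscale n), P {ω | x ∈ badTraps τ α m ε M n ω}
      ≤ ENNReal.ofReal (C * X) := by
    calc _ ≤ ∑ x ∈ intBox d (m * rscale n), ENNReal.ofReal ((2 * nuscale d n + 1) ^ d) *
          ENNReal.ofReal (2 * (ε * gscale α n) ^ (-α)) ^ 2 :=
        Finset.sum_le_sum fun x _ => measure_mem_badTraps_le hτ.indep
          (hτ.measure_ge_le_two_mul_rpow_neg hu hL) x
      _ ≤ ENNReal.ofReal ((2 * (m * rscale n) + 1) ^ d) *
          (ENNReal.ofReal ((2 * nuscale d n + 1) ^ d) *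
            ENNReal.ofReal (2 * (ε * gscale α n) ^ (-α)) ^ 2) := by
        rw [Finset.sum_const, nsmul_eq_mul, ← ENNReal.ofReal_natCast]
        gcongr
        exact card_intBox_le (by positivity)
      _ = ENNReal.ofReal ((2 * (m * rscale n) + 1) ^ d *
            ((2 * nuscale d n + 1) ^ d * (2 * (ε * gscale α n) ^ (-α)) ^ 2)) := by
        rw [← ENNReal.ofReal_pow (by positivity), ← ENNReal.ofReal_mul (by positivity),
          ← ENNReal.ofReal_mul (by positivity)]
      _ ≤ ENNReal.ofReal (C * X) :=
        ENNReal.ofReal_le_ofReal (pair_count_bound_le (Nat.cast_nonneg m) hr hν hε hg d)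
  calc
    _ ≤ (∑ x ∈ intBox d (m * rscale n), P {ω | x ∈ badTraps τ α m ε M n ω}) /
        ENNReal.ofReal ((n : ℝ) ^ 2 * X) :=
      measure_lt_ncard_le _ badTraps_subset_intBox
        (measurableSet_mem_badTraps hτ.meas) (mul_pos hn2 hX)
    _ ≤ ENNReal.ofReal (C / (n : ℝ) ^ 2) := by
      refine ENNReal.div_le_of_le_mul (hsum.trans_eq ?_)
      rw [← ENNReal.ofReal_mul (by positivity)]
      congr 1
      field_simp

theorem stmt_7_general {Ω : Type*} [MeasurableSpace Ω] (P : Measure Ω)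
    (d : ℕ) (α : ℝ) (hα : α ∈ Set.Ioo (0 : ℝ) 1) (L : ℝ → ℝ)
    (τ : (Fin d → ℤ) → Ω → ℝ) (hτ : IsEnv P d α L τ)
    (ε M : ℝ) (hε : 0 < ε) (m : ℕ) :
    ∀ᵐ ω ∂P, ∃ n₀ : ℕ, ∀ n ≥ n₀, ∀ x ∈ bigD d m n,
      ((badTraps τ α m ε M n ω ∩ cube x (iotascale d n)).ncard : ℝ)
        ≤ (n : ℝ) ^ 2 * nuscale d n ^ (d : ℝ) * gscale α n ^ (-(2 * α)) * rscale n ^ (d : ℝ) := by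
  have hthreshold : Tendsto (fun n => ε * gscale α n) atTop atTop :=
    (tendsto_gscale_atTop hα.1).const_mul_atTop hε
  obtain ⟨N, hN⟩ := eventually_atTop.mp <| (eventually_gt_atTop 0).and <|
    (hthreshold.eventually_ge_atTop 1).and
      (hthreshold.eventually (hτ.decay.eventually_le_const one_pos))
  filter_upwards [ae_eventually_notMem_of_measure_le_div_sq N fun n hn =>
    hτ.measure_lt_ncard_badTraps_le m M (hN n hn).1 (hN n hn).2.1 (hN n hn).2.2] with ω hω
  obtain ⟨n₀, hn₀⟩ := eventually_atTop.mp hω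
  refine ⟨n₀, fun n hn x _ => ?_⟩
  have hfinite : (badTraps τ α m ε M n ω).Finite :=
    (intBox d (m * rscale n)).finite_toSet.subset (badTraps_subset_intBox ω)
  calc _ ≤ ((badTraps τ α m ε M n ω).ncard : ℝ) := by
        exact_mod_cast Set.ncard_le_ncard Set.inter_subset_left hfinite
    _ ≤ _ := not_lt.mp (hn₀ n hn)

theorem stmt_7 {Ω : Type*} [MeasurableSpace Ω] (P : Measure Ω) [IsProbabilityMeasure P]
    (d : ℕ) (hd : 3 ≤ d) (α : ℝ) (hα : α ∈ Set.Ioo (0 : ℝ) 1) (L : ℝ → ℝ)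
    (τ : (Fin d → ℤ) → Ω → ℝ) (hτ : IsEnv P d α L τ)
    (ε M : ℝ) (hε : 0 < ε) (hε1 : ε < 1) (hM : 1 < M) (m : ℕ) (hm : 1 ≤ m) :
    ∀ᵐ ω ∂P, ∃ n₀ : ℕ, ∀ n ≥ n₀, ∀ x ∈ bigD d m n,
      ((badTraps τ α m ε M n ω ∩ cube x (iotascale d n)).ncard : ℝ)
        ≤ (n : ℝ) ^ 2 * nuscale d n ^ (d : ℝ) * gscale α n ^ (-(2 * α)) * rscale n ^ (d : ℝ) :=
  stmt_7_general P d α hα L τ hτ ε M hε m
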